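/- (Nemhauser–Wolsey–Fisher) Let F be a nonnegative monotone submodular set function on a finite ground set with F(∅)=0, and let S_0 = ∅, S_{t+1} = S_t ∪ {x_{t+1}} where x_{t+1} maximizes the marginal gain F(S_t ∪ {x}) − F(S_t) over all remaining elements. Then for any N-element set S*, F(S_N) ≥ (1 − (1 − 1/N)^N) · F(S*) ≥ (1 − 1/e) · F(S*). -/

import Mathlib

/-- Submodularity (diminishing returns) for set functions. -/
def Submodular {Q : Type*} [DecidableEq Q] (f : Finset Q → ℝ) : Prop :=
  ∀ S T : Finset Q, S ⊆ T → ∀ q ∉ T,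
    f (insert q S) - f S ≥ f (insert q T) - f T

lemma sum_marginal_bound {Q : Type*} [DecidableEq Q] (F : Finset Q → ℝ)
    (hsub : Submodular F) (A B : Finset Q) :
    F (A ∪ B) - F B ≤ ∑ x ∈ A, (F (insert x B) - F B) := by
  induction A using Finset.induction_on with
  | empty => simp
  | @insert a A ha IH =>
    rw [Finset.sum_insert ha]
    have hu : insert a A ∪ B = insert a (A ∪ B) := by
      ext y; simp [or_assoc]
    by_cases hb : a ∈ A ∪ B
    · have h1 : insert a (A ∪ B) = A ∪ B := Finset.insert_eq_self.mpr hb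
      have hb' : a ∈ B := by
        rcases Finset.mem_union.mp hb with h | h
        · exact absurd h ha
        · exact h
      have h2 : insert a B = B := Finset.insert_eq_self.mpr hb'
      rw [hu, h1, h2]
      linarith
    · have := hsub B (A ∪ B) Finset.subset_union_right a hb
      rw [hu]
      linarith

theorem greedy_submodular_guarantee {Q : Type*} [DecidableEq Q] (F : Finset Q → ℝ)
    (hempty : F ∅ = 0) (hnonneg : ∀ S, 0 ≤ F S)
    (hmono : ∀ S T : Finset Q, S ⊆ T → F S ≤ F T) (hsub : Submodular F)
    (S : ℕ → Finset Q) (hS0 : S 0 = ∅)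
    (hgreedy : ∀ t : ℕ, ∃ x ∉ S t, S (t + 1) = insert x (S t) ∧
      ∀ y ∉ S t, F (insert y (S t)) - F (S t) ≤ F (insert x (S t)) - F (S t))
    (N : ℕ) (hN : 1 ≤ N) (Sstar : Finset Q) (hcard : Sstar.card = N) :
    F (S N) ≥ (1 - (1 - 1 / (N : ℝ)) ^ N) * F Sstar ∧
      (1 - (1 - 1 / (N : ℝ)) ^ N) * F Sstar ≥ (1 - 1 / Real.exp 1) * F Sstar := by
  have hN' : (1:ℝ) ≤ (N:ℝ) := by exact_mod_cast hN
  have hNpos : (0:ℝ) < (N:ℝ) := by linarith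
  have hNne : (N:ℝ) ≠ 0 := ne_of_gt hNpos
  set c : ℝ := 1 - 1 / (N:ℝ) with hc_def
  have hc0 : 0 ≤ c := by
    have : 1 / (N:ℝ) ≤ 1 := by
      rw [div_le_one hNpos]; exact hN'
    rw [hc_def]; linarith
  have hNc : (N:ℝ) * c = (N:ℝ) - 1 := by
    rw [hc_def, mul_sub, mul_one, mul_one_div_cancel hNne]
  -- key step inequality
  have key : ∀ t, F Sstar - F (S t) ≤ (N:ℝ) * (F (S (t+1)) - F (S t)) := by
    intro t
    obtain ⟨x, hx, hSt1, hmax⟩ := hgreedy t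
    have hg0 : 0 ≤ F (insert x (S t)) - F (S t) := by
      have := hmono (S t) (insert x (S t)) (Finset.subset_insert _ _)
      linarith
    have h1 : F Sstar ≤ F (Sstar ∪ S t) := hmono _ _ Finset.subset_union_left
    have h2 := sum_marginal_bound F hsub Sstar (S t)
    have h3 : ∑ y ∈ Sstar, (F (insert y (S t)) - F (S t)) ≤
        ∑ _y ∈ Sstar, (F (insert x (S t)) - F (S t)) := by
      apply Finset.sum_le_sum
      intro y hy
      by_cases hyS : y ∈ S t
      · rw [Finset.insert_eq_self.mpr hyS]; linarith
      · exact hmax y hyS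
    rw [Finset.sum_const, hcard, nsmul_eq_mul] at h3
    rw [hSt1]
    linarith
  have key2 : ∀ t, F Sstar - F (S t) ≤ c ^ t * F Sstar := by
    intro t
    induction t with
    | zero => simp [hS0, hempty]
    | succ t IH =>
      have h1 : (N:ℝ) * (F Sstar - F (S (t+1))) ≤ ((N:ℝ) - 1) * (F Sstar - F (S t)) := by
        have := key t; nlinarith [key t]
      have h2 : ((N:ℝ) - 1) * (F Sstar - F (S t)) ≤ ((N:ℝ) - 1) * (c ^ t * F Sstar) :=
        mul_le_mul_of_nonneg_left IH (by linarith)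
      have h3 : ((N:ℝ) - 1) * (c ^ t * F Sstar) = (N:ℝ) * (c ^ (t+1) * F Sstar) := by
        rw [← hNc]; ring
      have h4 : (N:ℝ) * (F Sstar - F (S (t+1))) ≤ (N:ℝ) * (c ^ (t+1) * F Sstar) := by
        linarith
      exact le_of_mul_le_mul_left h4 hNpos
  constructor
  · have := key2 N
    have : (1 - c ^ N) * F Sstar = F Sstar - c ^ N * F Sstar := by ring
    nlinarith [key2 N]
  · have hce : c ≤ Real.exp (-(1 / (N:ℝ))) := by
      have := Real.add_one_le_exp (-(1 / (N:ℝ)))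
      rw [hc_def]; linarith
    have hpow : c ^ N ≤ Real.exp (-(1 / (N:ℝ))) ^ N := pow_le_pow_left₀ hc0 hce N
    have hexp : Real.exp (-(1 / (N:ℝ))) ^ N = Real.exp (-1) := by
      rw [← Real.exp_nat_mul]
      congr 1
      field_simp
    have : c ^ N ≤ 1 / Real.exp 1 := by
      rw [hexp, Real.exp_neg] at hpow
      rw [one_div]; exact hpow
    have := hnonneg Sstar
    nlinarith
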